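/- With α(T) = 9π²/4 − 4π²/T² and σ defined piecewise as σ(T) = −(3√(2π)/4)√(−α(T)) tanh(√(−α(T))) for 0 < T < 4/3 and σ(T) = (3√(2π)/4)√(α(T)) tan(√(α(T))) for T > 4/3 (T ≠ √2), σ is differentiable at T = 4/3 with derivative σ'(4/3) = 81√2 π^{5/2}/32; in particular both one-sided derivatives at 4/3 equal 81√2 π^{5/2}/32 > 0. -/

import Mathlib

/-!
Near `T = 4/3` both branches of `σ` read `C · g (α T)` with `C = 3√(2π)/4`, where
`g a = √a tan √a` is continued to `a < 0` through `tanh`, and `α (4/3) = 0`. The slope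
`g a / a` is `tan s / s` or `tanh s / s` with `s = √|a|`, which tends to `1` from either side,
so `g' 0 = 1` and the chain rule gives `σ' (4/3) = C · α' (4/3) = C · 27π²/8`.
-/

open Real Set Filter Topology

theorem HasDerivAt.hasDerivWithinAt_sqrt_mul_comp_sqrt {f : ℝ → ℝ} {c : ℝ}
    (hf : HasDerivAt f c 0) (hf0 : f 0 = 0) :
    HasDerivWithinAt (fun a => √a * f √a) c (Ici 0) 0 := by
  rw [← hasDerivWithinAt_Ioi_iff_Ici, hasDerivWithinAt_iff_tendsto_slope' self_notMem_Ioi]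
  have hsqrt : Tendsto (√·) (𝓝[>] 0) (𝓝[≠] 0) := by
    refine tendsto_nhdsWithin_iff.mpr ⟨?_, ?_⟩
    · simpa using continuous_sqrt.continuousWithinAt.tendsto (x := (0:ℝ)) (s := Ioi 0)
    · filter_upwards [self_mem_nhdsWithin] with a ha using (sqrt_pos.mpr ha).ne'
  refine ((hasDerivAt_iff_tendsto_slope.mp hf).comp hsqrt).congr' ?_
  filter_upwards [self_mem_nhdsWithin] with a (ha : 0 < a)
  have hs : √a ≠ 0 := (sqrt_pos.mpr ha).ne'
  simp only [Function.comp, slope_def_field, hf0, sqrt_zero, zero_mul, sub_zero]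
  field_simp
  rw [sq_sqrt ha.le]

theorem HasDerivAt.hasDerivWithinAt_neg_sqrt_neg_mul_comp_sqrt_neg {f : ℝ → ℝ} {c : ℝ}
    (hf : HasDerivAt f c 0) (hf0 : f 0 = 0) :
    HasDerivWithinAt (fun a => -(√(-a) * f √(-a))) c (Iic 0) 0 := by
  have h := (hf.hasDerivWithinAt_sqrt_mul_comp_sqrt hf0).comp_of_eq 0
    (hasDerivWithinAt_neg 0 (Iic 0)) (fun a (ha : a ≤ 0) => neg_nonneg.mpr ha) neg_zero.symm
  simpa [Function.comp_def, Pi.neg_def] using h.neg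

theorem Real.hasDerivAt_tanh_zero : HasDerivAt tanh 1 0 := by
  rw [funext tanh_eq_sinh_div_cosh]
  exact ((hasDerivAt_sinh 0).div (hasDerivAt_cosh 0) (cosh_pos 0).ne').congr_deriv (by simp)

theorem Real.hasDerivAt_tan_zero : HasDerivAt tan 1 0 := by
  simpa using hasDerivAt_tan (x := 0) (by simp)

/-- For `a < 0` this is the real form of `√a tan √a`, since `tan (i s) = i tanh s`. -/
noncomputable def sqrtMulTanSqrt (a : ℝ) : ℝ :=
  if 0 ≤ a then √a * tan √a else -(√(-a) * tanh √(-a))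

theorem hasDerivAt_sqrtMulTanSqrt_zero : HasDerivAt sqrtMulTanSqrt 1 0 := by
  have hright : HasDerivWithinAt sqrtMulTanSqrt 1 (Ici 0) 0 :=
    (hasDerivAt_tan_zero.hasDerivWithinAt_sqrt_mul_comp_sqrt tan_zero).congr
      (fun a (ha : 0 ≤ a) => if_pos ha) (if_pos le_rfl)
  have hleft : HasDerivWithinAt sqrtMulTanSqrt 1 (Iic 0) 0 :=
    (hasDerivAt_tanh_zero.hasDerivWithinAt_neg_sqrt_neg_mul_comp_sqrt_neg tanh_zero).congr
      (fun a (ha : a ≤ 0) => by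
        rcases ha.lt_or_eq with ha | rfl
        · exact if_neg (not_le.mpr ha)
        · simp [sqrtMulTanSqrt])
      (by simp [sqrtMulTanSqrt])
  simpa using hleft.union hright

noncomputable def alpha (T : ℝ) : ℝ := 9 * π ^ 2 / 4 - 4 * π ^ 2 / T ^ 2

theorem alpha_eq_mul_div {T : ℝ} (hT : T ≠ 0) :
    alpha T = π ^ 2 * (9 * T ^ 2 - 16) / (4 * T ^ 2) := by
  unfold alpha
  field_simp
  ring

theorem alpha_neg {T : ℝ} (h0 : 0 < T) (h : T < 4 / 3) : alpha T < 0 := by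
  rw [alpha_eq_mul_div h0.ne']
  exact div_neg_of_neg_of_pos (mul_neg_of_pos_of_neg (by positivity) (by nlinarith)) (by positivity)

theorem alpha_nonneg {T : ℝ} (h : 4 / 3 ≤ T) : 0 ≤ alpha T := by
  rw [alpha_eq_mul_div (by positivity)]
  exact div_nonneg (mul_nonneg (by positivity) (by nlinarith)) (by positivity)

theorem alpha_four_thirds : alpha (4 / 3) = 0 := by
  norm_num [alpha]
  ring

theorem hasDerivAt_alpha_four_thirds : HasDerivAt alpha (27 * π ^ 2 / 8) (4 / 3) := by
  have h := ((hasDerivAt_const (4 / 3 : ℝ) (4 * π ^ 2)).div (hasDerivAt_pow 2 _)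
    (by norm_num)).const_sub (9 * π ^ 2 / 4)
  exact h.congr_deriv (by norm_num; ring)

theorem stmt_17 (σ : ℝ → ℝ)
    (hσ1 : ∀ T ∈ Set.Ioo (0:ℝ) (4/3),
      σ T = -(3 * Real.sqrt (2 * π) / 4) *
        Real.sqrt (-(9 * π^2 / 4 - 4 * π^2 / T^2)) *
        Real.tanh (Real.sqrt (-(9 * π^2 / 4 - 4 * π^2 / T^2))))
    (hσ2 : σ (4/3) = 0)
    (hσ3 : ∀ T : ℝ, 4/3 < T → T ≠ Real.sqrt 2 →
      σ T = (3 * Real.sqrt (2 * π) / 4) *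
        Real.sqrt (9 * π^2 / 4 - 4 * π^2 / T^2) *
        Real.tan (Real.sqrt (9 * π^2 / 4 - 4 * π^2 / T^2))) :
    HasDerivAt σ (81 * Real.sqrt 2 * π ^ ((5:ℝ)/2) / 32) (4/3) ∧
    HasDerivWithinAt σ (81 * Real.sqrt 2 * π ^ ((5:ℝ)/2) / 32) (Set.Iio (4/3)) (4/3) ∧
    HasDerivWithinAt σ (81 * Real.sqrt 2 * π ^ ((5:ℝ)/2) / 32) (Set.Ioi (4/3)) (4/3) ∧
    0 < 81 * Real.sqrt 2 * π ^ ((5:ℝ)/2) / 32 := by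
  have hσ : σ =ᶠ[𝓝 (4 / 3)] fun T => 3 * √(2 * π) / 4 * sqrtMulTanSqrt (alpha T) := by
    have h43 : (4 / 3 : ℝ) < √2 := by
      rw [lt_sqrt (by norm_num)]
      norm_num
    filter_upwards [Ioo_mem_nhds (by norm_num : (0:ℝ) < 4 / 3) h43] with T ⟨hT0, hT2⟩
    rcases lt_trichotomy T (4 / 3) with hT | rfl | hT
    · rw [hσ1 T ⟨hT0, hT⟩, sqrtMulTanSqrt, if_neg (alpha_neg hT0 hT).not_ge, alpha]
      ring
    · rw [hσ2, alpha_four_thirds, sqrtMulTanSqrt, if_pos le_rfl]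
      simp
    · rw [hσ3 T hT hT2.ne, sqrtMulTanSqrt, if_pos (alpha_nonneg hT.le), alpha]
      ring
  have hderiv := ((alpha_four_thirds ▸ hasDerivAt_sqrtMulTanSqrt_zero).comp (4 / 3 : ℝ)
    hasDerivAt_alpha_four_thirds).const_mul (3 * √(2 * π) / 4) |>.congr_of_eventuallyEq hσ
  have hconst : 3 * √(2 * π) / 4 * (1 * (27 * π ^ 2 / 8)) = 81 * √2 * π ^ ((5:ℝ) / 2) / 32 := by
    rw [sqrt_mul zero_le_two, show (5:ℝ) / 2 = 2 + 1 / 2 by norm_num, rpow_add pi_pos, rpow_two,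
      ← sqrt_eq_rpow]
    ring
  rw [hconst] at hderiv
  exact ⟨hderiv, hderiv.hasDerivWithinAt, hderiv.hasDerivWithinAt, by positivity⟩
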